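/- Let λ be a real constant and let f : ℝⁿ → ℝ be a smooth function satisfying Σ_{i,j} g^{ij} f_{ij} = -f + Σ_i x_i f_i + λ√(1+|Df|²) on ℝⁿ. Set ψ = log det(g_{ij}). Then at any point x₀ ∈ ℝⁿ at which the gradient has the form Df(x₀) = (f_1, 0, …, 0), one has L_{(λ,f)}ψ = (1/2) Σ_{i,j} g^{ij} ψ_i ψ_j + 2 Σ_{i,p} (f_{pi})² / ((1+f_i²)(1+f_p²)(1+f_1²)), where L_{(λ,f)} is taken with coefficient matrix (a_{ij}) = (g_{ij}) (which is diagonal at x₀ with g_{ii} = 1 + f_i²). -/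

import Mathlib

/-- The `i`-th partial derivative of a function `f : ℝⁿ → ℝ`. -/
noncomputable def pd {n : ℕ} (f : (Fin n → ℝ) → ℝ) (i : Fin n) (x : Fin n → ℝ) : ℝ :=
  fderiv ℝ f x (Pi.single i 1)

/-- The induced metric `g_{ij} = δ_{ij} + f_i f_j` of the graph of `f`. -/
noncomputable def gMat {n : ℕ} (f : (Fin n → ℝ) → ℝ) (x : Fin n → ℝ) :
    Matrix (Fin n) (Fin n) ℝ :=
  Matrix.of fun i j => (if i = j then (1 : ℝ) else 0) + pd f i x * pd f j x

/-- The inverse metric `(g^{ij})`. -/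
noncomputable def gInv {n : ℕ} (f : (Fin n → ℝ) → ℝ) (x : Fin n → ℝ) :
    Matrix (Fin n) (Fin n) ℝ :=
  (gMat f x)⁻¹

/-- The operator `L_{(λ,f)}ψ = Σ a^{ij} ψ_{ij} − ⟨x, Dψ⟩ − λ⟨Df, Dψ⟩/√(1+|Df|²)`, where
`(a^{ij})` is the inverse of the matrix field `a`. -/
noncomputable def Lop {n : ℕ} (lam : ℝ) (f : (Fin n → ℝ) → ℝ)
    (a : (Fin n → ℝ) → Matrix (Fin n) (Fin n) ℝ)
    (ψ : (Fin n → ℝ) → ℝ) (x : Fin n → ℝ) : ℝ :=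
  (∑ i, ∑ j, (a x)⁻¹ i j * pd (pd ψ j) i x)
    - (∑ i, x i * pd ψ i x)
    - lam * (∑ i, pd f i x * pd ψ i x) / Real.sqrt (1 + ∑ i, (pd f i x) ^ 2)

section calculus
variable {n : ℕ} {g h : (Fin n → ℝ) → ℝ} {x : Fin n → ℝ} {i : Fin n}

lemma pd_of_hasFDerivAt {L : (Fin n → ℝ) →L[ℝ] ℝ} (hg : HasFDerivAt g L x) (i : Fin n) :
    pd g i x = L (Pi.single i 1) := by rw [pd, hg.fderiv]

lemma contDiff_pd (hg : ContDiff ℝ (⊤ : ℕ∞) g) (i : Fin n) : ContDiff ℝ (⊤ : ℕ∞) (pd g i) := by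
  have h1 : ContDiff ℝ (⊤ : ℕ∞) (fderiv ℝ g) := hg.fderiv_right (by simp)
  have h2 := (ContinuousLinearMap.apply ℝ ℝ (Pi.single i 1 : Fin n → ℝ)).contDiff.comp h1
  exact h2

lemma diffAt_pd (hg : ContDiff ℝ (⊤ : ℕ∞) g) (i : Fin n) (x : Fin n → ℝ) :
    DifferentiableAt ℝ (pd g i) x := (contDiff_pd hg i).differentiable (by simp) x

lemma pd_comm (hg : ContDiff ℝ (⊤ : ℕ∞) g) (a b : Fin n) (x : Fin n → ℝ) :
    pd (pd g a) b x = pd (pd g b) a x := by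
  have hd : ∀ y, HasFDerivAt g (fderiv ℝ g y) y :=
    fun y => (hg.differentiable (by simp) y).hasFDerivAt
  have h2 : HasFDerivAt (fderiv ℝ g) (fderiv ℝ (fderiv ℝ g) x) x :=
    (((hg.fderiv_right (m := (⊤ : ℕ∞)) (by simp)).differentiable (by simp)) x).hasFDerivAt
  have key : ∀ a b : Fin n, pd (pd g a) b x
      = fderiv ℝ (fderiv ℝ g) x (Pi.single b 1) (Pi.single a 1) := by
    intro a b
    have h3 := ((ContinuousLinearMap.apply ℝ ℝ (Pi.single a 1 : Fin n → ℝ)).hasFDerivAt).comp x h2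
    exact pd_of_hasFDerivAt h3 b
  rw [key, key, second_derivative_symmetric hd h2]

lemma pd_const (c : ℝ) (i : Fin n) (x : Fin n → ℝ) : pd (fun _ => c) i x = 0 := by
  rw [pd, fderiv_fun_const]; simp

lemma pd_add (hg : DifferentiableAt ℝ g x) (hh : DifferentiableAt ℝ h x) :
    pd (fun y => g y + h y) i x = pd g i x + pd h i x := by
  rw [pd, fderiv_fun_add hg hh]; simp [pd]

lemma pd_sub (hg : DifferentiableAt ℝ g x) (hh : DifferentiableAt ℝ h x) :
    pd (fun y => g y - h y) i x = pd g i x - pd h i x := by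
  rw [pd, fderiv_fun_sub hg hh]; simp [pd]

lemma pd_neg : pd (fun y => -g y) i x = -pd g i x := by
  rw [pd, fderiv_fun_neg]; simp [pd]

lemma pd_mul (hg : DifferentiableAt ℝ g x) (hh : DifferentiableAt ℝ h x) :
    pd (fun y => g y * h y) i x = pd g i x * h x + g x * pd h i x := by
  rw [pd, fderiv_fun_mul hg hh]; simp [pd]; ring

lemma pd_const_mul (hg : DifferentiableAt ℝ g x) (c : ℝ) :
    pd (fun y => c * g y) i x = c * pd g i x := by
  rw [pd, fderiv_const_mul hg]; simp [pd]

lemma pd_sum {ι : Type*} {s : Finset ι} {g : ι → (Fin n → ℝ) → ℝ}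
    (hg : ∀ j ∈ s, DifferentiableAt ℝ (g j) x) (i : Fin n) :
    pd (fun y => ∑ j ∈ s, g j y) i x = ∑ j ∈ s, pd (g j) i x := by
  rw [pd, fderiv_fun_sum hg]; simp [pd]

lemma pd_inv (hh : DifferentiableAt ℝ h x) (hx : h x ≠ 0) :
    pd (fun y => (h y)⁻¹) i x = -pd h i x / (h x) ^ 2 := by
  have h1 := (hasDerivAt_inv hx).comp_hasFDerivAt x hh.hasFDerivAt
  have h1' : HasFDerivAt (fun y => (h y)⁻¹) (-(h x ^ 2)⁻¹ • fderiv ℝ h x) x := h1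
  rw [pd_of_hasFDerivAt h1' i]; simp [pd]; ring

lemma diffAt_div (hg : DifferentiableAt ℝ g x) (hh : DifferentiableAt ℝ h x) (hx : h x ≠ 0) :
    DifferentiableAt ℝ (fun y => g y / h y) x := by
  have h1 : (fun y => g y / h y) = fun y => g y * (h y)⁻¹ := funext fun y => div_eq_mul_inv _ _
  rw [h1]; exact hg.mul (hh.inv hx)

lemma pd_div (hg : DifferentiableAt ℝ g x) (hh : DifferentiableAt ℝ h x) (hx : h x ≠ 0) :
    pd (fun y => g y / h y) i x = (pd g i x * h x - g x * pd h i x) / (h x) ^ 2 := by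
  have h2 : DifferentiableAt ℝ (fun y => (h y)⁻¹) x := hh.inv hx
  have : (fun y => g y / h y) = fun y => g y * (h y)⁻¹ := by ext y; rw [div_eq_mul_inv]
  rw [this, pd_mul hg h2, pd_inv hh hx]
  field_simp
  ring

lemma pd_log (hh : DifferentiableAt ℝ h x) (hx : h x ≠ 0) :
    pd (fun y => Real.log (h y)) i x = pd h i x / h x := by
  rw [pd_of_hasFDerivAt (hh.hasFDerivAt.log hx) i]; simp [pd]; ring

lemma pd_sqrt (hh : DifferentiableAt ℝ h x) (hx : h x ≠ 0) :
    pd (fun y => Real.sqrt (h y)) i x = pd h i x / (2 * Real.sqrt (h x)) := by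
  rw [pd_of_hasFDerivAt (hh.hasFDerivAt.sqrt hx) i]; simp [pd]; ring

lemma pd_coord (j : Fin n) : pd (fun y => y j) i x = if i = j then 1 else 0 := by
  have h4 : HasFDerivAt (fun y : Fin n → ℝ => y j)
      (ContinuousLinearMap.proj (R := ℝ) (φ := fun _ : Fin n => ℝ) j) x :=
    (ContinuousLinearMap.proj (R := ℝ) (φ := fun _ : Fin n => ℝ) j).hasFDerivAt (x := x)
  rw [pd_of_hasFDerivAt h4 i]
  simp [Pi.single_apply, eq_comm]

lemma pd_sq (hg : DifferentiableAt ℝ g x) :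
    pd (fun y => (g y) ^ 2 : (Fin n → ℝ) → ℝ) i x = 2 * g x * pd g i x := by
  have : (fun y => (g y) ^ 2) = fun y => g y * g y := by ext y; ring
  rw [this, pd_mul hg hg]; ring

end calculus

section mat
variable {n : ℕ} (f : (Fin n → ℝ) → ℝ) (x : Fin n → ℝ)

lemma gMat_det : (gMat f x).det = 1 + ∑ i, (pd f i x) ^ 2 := by
  have h1 : gMat f x
      = 1 + Matrix.replicateCol Unit (fun i => pd f i x) * Matrix.replicateRow Unit (fun i => pd f i x) := by
    ext i j
    simp [gMat, Matrix.one_apply, Matrix.mul_apply, Matrix.replicateCol, Matrix.replicateRow]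
  rw [h1, Matrix.det_one_add_replicateCol_mul_replicateRow]
  simp [dotProduct, sq]

lemma gInv_eq :
    gInv f x = Matrix.of fun i j =>
      (if i = j then (1 : ℝ) else 0)
        - pd f i x * pd f j x / (1 + ∑ k, (pd f k x) ^ 2) := by
  have hv : (0:ℝ) < 1 + ∑ k, (pd f k x) ^ 2 := by positivity
  apply Matrix.inv_eq_right_inv
  ext i j
  simp only [Matrix.mul_apply, gMat, Matrix.of_apply, Matrix.one_apply]
  rw [Finset.sum_congr rfl (fun k _ => by ring_nf :
    ∀ k ∈ Finset.univ, ((if i = k then (1:ℝ) else 0) + pd f i x * pd f k x) *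
        ((if k = j then (1:ℝ) else 0) - pd f k x * pd f j x / (1 + ∑ k, (pd f k x) ^ 2))
      = ((if i = k then (1:ℝ) else 0) * (if k = j then (1:ℝ) else 0))
        + (pd f i x * ((if k = j then (1:ℝ) else 0) * pd f k x))
        - ((if i = k then (1:ℝ) else 0) * (pd f k x * pd f j x / (1 + ∑ k, (pd f k x) ^ 2)))
        - pd f i x * pd f j x / (1 + ∑ k, (pd f k x) ^ 2) * (pd f k x)^2)]
  rw [Finset.sum_sub_distrib, Finset.sum_sub_distrib, Finset.sum_add_distrib]
  rw [← Finset.mul_sum, ← Finset.mul_sum]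
  simp only [ite_mul, mul_ite, one_mul, zero_mul, mul_one, mul_zero,
    Finset.sum_ite_eq, Finset.sum_ite_eq', Finset.mem_univ, if_true]
  field_simp
  split <;> ring
end mat

section graph
variable {n : ℕ} {f : (Fin n → ℝ) → ℝ}

/-- `v = 1 + |Df|²`. -/
noncomputable def vf {n : ℕ} (f : (Fin n → ℝ) → ℝ) : (Fin n → ℝ) → ℝ :=
  fun x => 1 + ∑ p, (pd f p x) ^ 2

lemma vf_pos (x : Fin n → ℝ) : 0 < vf f x := by
  have h : (0:ℝ) ≤ ∑ p, (pd f p x) ^ 2 := by positivity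
  unfold vf; linarith

lemma vf_ne (x : Fin n → ℝ) : vf f x ≠ 0 := (vf_pos x).ne'

lemma contDiff_vf (hf : ContDiff ℝ (⊤ : ℕ∞) f) : ContDiff ℝ (⊤ : ℕ∞) (vf f) :=
  contDiff_const.add (ContDiff.sum fun p _ => (contDiff_pd hf p).pow 2)

lemma diffAt_vf (hf : ContDiff ℝ (⊤ : ℕ∞) f) (x : Fin n → ℝ) : DifferentiableAt ℝ (vf f) x :=
  (contDiff_vf hf).differentiable (by simp) x

lemma pd_vf (hf : ContDiff ℝ (⊤ : ℕ∞) f) (j : Fin n) (x : Fin n → ℝ) :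
    pd (vf f) j x = ∑ p, 2 * (pd f p x * pd (pd f p) j x) := by
  calc pd (vf f) j x
      = pd (fun _ => (1:ℝ)) j x + pd (fun y => ∑ p, (pd f p y) ^ 2) j x :=
        pd_add (differentiableAt_const 1)
          (DifferentiableAt.fun_sum fun p _ => (diffAt_pd hf p x).pow 2)
    _ = 0 + ∑ p, pd (fun y => (pd f p y) ^ 2) j x := by
        rw [pd_const]
        exact congrArg _ (pd_sum (fun p _ => (diffAt_pd hf p x).pow 2) j)
    _ = ∑ p, 2 * (pd f p x * pd (pd f p) j x) := by
        rw [zero_add]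
        exact Finset.sum_congr rfl fun p _ => (pd_sq (diffAt_pd hf p x)).trans (by ring)

lemma pd_pd_vf (hf : ContDiff ℝ (⊤ : ℕ∞) f) (i j : Fin n) (x : Fin n → ℝ) :
    pd (pd (vf f) j) i x
      = ∑ p, 2 * (pd (pd f p) i x * pd (pd f p) j x
          + pd f p x * pd (pd (pd f p) j) i x) := by
  have hfun : pd (vf f) j = fun y => ∑ p, 2 * (pd f p y * pd (pd f p) j y) :=
    funext fun y => pd_vf hf j y
  rw [hfun]
  calc pd (fun y => ∑ p, 2 * (pd f p y * pd (pd f p) j y)) i x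
      = ∑ p, pd (fun y => 2 * (pd f p y * pd (pd f p) j y)) i x :=
        pd_sum (fun p _ =>
          (((diffAt_pd hf p x).mul (diffAt_pd (contDiff_pd hf p) j x)).const_mul 2)) i
    _ = ∑ p, 2 * (pd (pd f p) i x * pd (pd f p) j x + pd f p x * pd (pd (pd f p) j) i x) := by
        refine Finset.sum_congr rfl fun p _ => ?_
        rw [pd_const_mul (g := fun y => pd f p y * pd (pd f p) j y) ((diffAt_pd hf p x).mul (diffAt_pd (contDiff_pd hf p) j x)),
          pd_mul (diffAt_pd hf p x) (diffAt_pd (contDiff_pd hf p) j x)]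

end graph

section graph2
variable {n : ℕ} {f : (Fin n → ℝ) → ℝ}

lemma pd_log_vf (hf : ContDiff ℝ (⊤ : ℕ∞) f) (i : Fin n) (x : Fin n → ℝ) :
    pd (fun y => Real.log (vf f y)) i x = pd (vf f) i x / vf f x :=
  pd_log (diffAt_vf hf x) (vf_ne x)

lemma pd_pd_log_vf (hf : ContDiff ℝ (⊤ : ℕ∞) f) (i j : Fin n) (x : Fin n → ℝ) :
    pd (pd (fun y => Real.log (vf f y)) j) i x
      = (pd (pd (vf f) j) i x * vf f x - pd (vf f) j x * pd (vf f) i x) / (vf f x) ^ 2 := by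
  have hfun : pd (fun y => Real.log (vf f y)) j = fun y => pd (vf f) j y / vf f y :=
    funext fun y => pd_log_vf hf j y
  rw [hfun]
  exact pd_div (diffAt_pd (contDiff_vf hf) j x) (diffAt_vf hf x) (vf_ne x)

lemma pd_sum_diag (hf : ContDiff ℝ (⊤ : ℕ∞) f) (k : Fin n) (x : Fin n → ℝ) :
    pd (fun y => ∑ i, pd (pd f i) i y) k x = ∑ i, pd (pd (pd f i) i) k x :=
  pd_sum (fun i _ => diffAt_pd (contDiff_pd hf i) i x) k

lemma pd_Nf (hf : ContDiff ℝ (⊤ : ℕ∞) f) (k : Fin n) (x : Fin n → ℝ) :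
    pd (fun y => ∑ i, ∑ j, pd f i y * pd f j y * pd (pd f j) i y) k x
      = ∑ i, ∑ j, ((pd (pd f i) k x * pd f j x + pd f i x * pd (pd f j) k x)
            * pd (pd f j) i x
          + pd f i x * pd f j x * pd (pd (pd f j) i) k x) := by
  have d3 : ∀ (i j : Fin n) (x : Fin n → ℝ),
      DifferentiableAt ℝ (fun y => pd f i y * pd f j y * pd (pd f j) i y) x :=
    fun i j x => ((diffAt_pd hf i x).mul (diffAt_pd hf j x)).mul
      (diffAt_pd (contDiff_pd hf j) i x)
  calc pd (fun y => ∑ i, ∑ j, pd f i y * pd f j y * pd (pd f j) i y) k x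
      = ∑ i, pd (fun y => ∑ j, pd f i y * pd f j y * pd (pd f j) i y) k x :=
        pd_sum (fun i _ => DifferentiableAt.fun_sum fun j _ => d3 i j x) k
    _ = ∑ i, ∑ j, pd (fun y => pd f i y * pd f j y * pd (pd f j) i y) k x :=
        Finset.sum_congr rfl fun i _ => pd_sum (fun j _ => d3 i j x) k
    _ = _ := by
        refine Finset.sum_congr rfl fun i _ => Finset.sum_congr rfl fun j _ => ?_
        rw [pd_mul (g := fun y => pd f i y * pd f j y) ((diffAt_pd hf i x).mul (diffAt_pd hf j x))
            (diffAt_pd (contDiff_pd hf j) i x),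
          pd_mul (diffAt_pd hf i x) (diffAt_pd hf j x)]

lemma diffAt_coord (i : Fin n) (x : Fin n → ℝ) :
    DifferentiableAt ℝ (fun y : Fin n → ℝ => y i) x :=
  ((ContinuousLinearMap.proj (R := ℝ) (φ := fun _ : Fin n => ℝ) i).hasFDerivAt
    (x := x)).differentiableAt

lemma pd_xF (hf : ContDiff ℝ (⊤ : ℕ∞) f) (k : Fin n) (x : Fin n → ℝ) :
    pd (fun y => ∑ i, y i * pd f i y) k x
      = pd f k x + ∑ i, x i * pd (pd f i) k x := by
  calc pd (fun y => ∑ i, y i * pd f i y) k x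
      = ∑ i, pd (fun y => y i * pd f i y) k x :=
        pd_sum (fun i _ => (diffAt_coord i x).mul (diffAt_pd hf i x)) k
    _ = ∑ i, ((if k = i then 1 else 0) * pd f i x + x i * pd (pd f i) k x) := by
        refine Finset.sum_congr rfl fun i _ => ?_
        rw [pd_mul (diffAt_coord i x) (diffAt_pd hf i x), pd_coord]
    _ = pd f k x + ∑ i, x i * pd (pd f i) k x := by
        rw [Finset.sum_add_distrib]
        simp [ite_mul, Finset.sum_ite_eq]

lemma diffAt_sqrt_vf (hf : ContDiff ℝ (⊤ : ℕ∞) f) (x : Fin n → ℝ) :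
    DifferentiableAt ℝ (fun y => Real.sqrt (vf f y)) x :=
  (diffAt_vf hf x).sqrt (vf_ne x)

lemma pd_lam_sqrt (hf : ContDiff ℝ (⊤ : ℕ∞) f) (lam : ℝ) (k : Fin n) (x : Fin n → ℝ) :
    pd (fun y => lam * Real.sqrt (vf f y)) k x
      = lam * (pd (vf f) k x / (2 * Real.sqrt (vf f x))) := by
  rw [pd_const_mul (diffAt_sqrt_vf hf x) lam, pd_sqrt (diffAt_vf hf x) (vf_ne x)]

lemma sum_gInv_eq (f : (Fin n → ℝ) → ℝ) (x : Fin n → ℝ) :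
    ∑ i, ∑ j, gInv f x i j * pd (pd f j) i x
      = (∑ i, pd (pd f i) i x)
        - (∑ i, ∑ j, pd f i x * pd f j x * pd (pd f j) i x) / vf f x := by
  rw [gInv_eq]
  have hterm : ∀ i j : Fin n,
      ((if i = j then (1:ℝ) else 0) - pd f i x * pd f j x / vf f x) * pd (pd f j) i x
        = (if i = j then pd (pd f j) i x else 0)
          - pd f i x * pd f j x * pd (pd f j) i x / vf f x := by
    intro i j; split <;> ring
  simp only [Matrix.of_apply]
  calc ∑ i, ∑ j, ((if i = j then (1:ℝ) else 0)
          - pd f i x * pd f j x / (1 + ∑ k, (pd f k x) ^ 2)) * pd (pd f j) i x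
      = ∑ i, ∑ j, ((if i = j then pd (pd f j) i x else 0)
          - pd f i x * pd f j x * pd (pd f j) i x / vf f x) := by
        exact Finset.sum_congr rfl fun i _ => Finset.sum_congr rfl fun j _ => hterm i j
    _ = _ := by
        simp only [Finset.sum_sub_distrib, Finset.sum_ite_eq, Finset.mem_univ, if_true]
        congr 1
        rw [Finset.sum_div]
        exact Finset.sum_congr rfl fun i _ => (Finset.sum_div _ _ _).symm

end graph2

set_option maxHeartbeats 2000000 in
/-- For an entire smooth solution of the graphic `λ`-hypersurface equation and
`ψ = log det(g_{ij})`, at any point `x₀` where the gradient is of the form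
`Df(x₀) = (f_1, 0, …, 0)`, one has (with coefficient matrix `(a_{ij}) = (g_{ij})`)
`L_{(λ,f)}ψ = (1/2) Σ g^{ij} ψ_i ψ_j + 2 Σ_{i,p} f_{pi}²/((1+f_i²)(1+f_p²)(1+f_1²))`. -/
theorem lambda_hypersurface_L_of_log_det_at_adapted_point
    {n : ℕ} (hn : 0 < n) (lam : ℝ) (f : (Fin n → ℝ) → ℝ) (hf : ContDiff ℝ (⊤ : ℕ∞) f)
    (heq : ∀ x : Fin n → ℝ,
      ∑ i, ∑ j, gInv f x i j * pd (pd f j) i x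
        = -f x + ∑ i, x i * pd f i x
          + lam * Real.sqrt (1 + ∑ i, (pd f i x) ^ 2))
    (ψ : (Fin n → ℝ) → ℝ) (hψ : ψ = fun x => Real.log (gMat f x).det)
    (x₀ : Fin n → ℝ) (hx₀ : ∀ i : Fin n, i ≠ ⟨0, hn⟩ → pd f i x₀ = 0) :
    Lop lam f (gMat f) ψ x₀
      = (1 / 2) * (∑ i, ∑ j, gInv f x₀ i j * pd ψ i x₀ * pd ψ j x₀)
        + 2 * ∑ i, ∑ p, (pd (pd f p) i x₀) ^ 2
            / ((1 + (pd f i x₀) ^ 2) * (1 + (pd f p x₀) ^ 2)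
              * (1 + (pd f (⟨0, hn⟩ : Fin n) x₀) ^ 2)) := by
  subst hψ
  have hψv : (fun x => Real.log (gMat f x).det) = fun x => Real.log (vf f x) := by
    funext x; rw [gMat_det]; rfl
  rw [hψv]
  set i0 : Fin n := ⟨0, hn⟩ with hi0def
  rw [Lop]
  have hu : ∀ i, i ≠ i0 → pd f i x₀ = 0 := hx₀
  have hsym2 : ∀ i j, pd (pd f j) i x₀ = pd (pd f i) j x₀ := fun i j => pd_comm hf j i x₀
  have h1a : (1 + ∑ i, (pd f i x₀) ^ 2) = 1 + pd f i0 x₀ ^ 2 := by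
    congr 1
    rw [Finset.sum_eq_single i0 (fun p _ hp => by rw [hu p hp]; ring)
      (fun h => absurd (Finset.mem_univ i0) h)]
  have hVval : vf f x₀ = 1 + pd f i0 x₀ ^ 2 := h1a
  have hV0 : (1 : ℝ) + pd f i0 x₀ ^ 2 ≠ 0 := by positivity
  have hW0 : Real.sqrt (1 + pd f i0 x₀ ^ 2) ≠ 0 := by positivity
  have hc0 : ∀ i, (1 : ℝ) + pd f i x₀ ^ 2 ≠ 0 := fun i => by positivity
  -- inverse metric at x₀ is diagonal
  have hginv0 : ∀ i j, gInv f x₀ i j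
      = if i = j then ((1 : ℝ) + pd f i x₀ ^ 2)⁻¹ else 0 := by
    intro i j
    rw [gInv_eq]
    simp only [Matrix.of_apply]
    rw [h1a]
    by_cases hij : i = j
    · subst hij
      simp only [if_true]
      by_cases hii0 : i = i0
      · subst hii0; field_simp; ring
      · rw [hu i hii0]; norm_num
    · simp only [hij, if_false]
      by_cases hii0 : i = i0
      · have hj : j ≠ i0 := fun h => hij (h ▸ hii0)
        rw [hu j hj]; ring
      · rw [hu i hii0]; ring
  -- first derivatives of v at x₀
  have hpdv0 : ∀ k, pd (vf f) k x₀ = 2 * (pd f i0 x₀ * pd (pd f i0) k x₀) := by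
    intro k
    rw [pd_vf hf k x₀]
    rw [Finset.sum_eq_single i0 (fun p _ hp => by rw [hu p hp]; ring)
      (fun h => absurd (Finset.mem_univ i0) h)]
  have hψ1 : ∀ k, pd (fun x => Real.log (vf f x)) k x₀
      = 2 * (pd f i0 x₀ * pd (pd f i0) k x₀) / (1 + pd f i0 x₀ ^ 2) := by
    intro k; rw [pd_log_vf hf k x₀, hpdv0 k, hVval]
  have hpdv2 : ∀ i j, pd (pd (vf f) j) i x₀
      = (∑ p, 2 * (pd (pd f p) i x₀ * pd (pd f p) j x₀))
        + 2 * (pd f i0 x₀ * pd (pd (pd f i0) j) i x₀) := by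
    intro i j
    rw [pd_pd_vf hf i j x₀]
    have hsplit : ∀ p : Fin n, (2 : ℝ) * (pd (pd f p) i x₀ * pd (pd f p) j x₀
          + pd f p x₀ * pd (pd (pd f p) j) i x₀)
        = 2 * (pd (pd f p) i x₀ * pd (pd f p) j x₀)
          + 2 * (pd f p x₀ * pd (pd (pd f p) j) i x₀) := fun p => by ring
    rw [Finset.sum_congr rfl fun p _ => hsplit p, Finset.sum_add_distrib]
    congr 1
    rw [Finset.sum_eq_single i0 (fun p _ hp => by rw [hu p hp]; ring)
      (fun h => absurd (Finset.mem_univ i0) h)]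
  have hψ2 : ∀ i, pd (pd (fun x => Real.log (vf f x)) i) i x₀
      = ((∑ p, 2 * (pd (pd f p) i x₀ * pd (pd f p) i x₀))
            + 2 * (pd f i0 x₀ * pd (pd (pd f i0) i) i x₀)) / (1 + pd f i0 x₀ ^ 2)
          - (2 * (pd f i0 x₀ * pd (pd f i0) i x₀))
            * (2 * (pd f i0 x₀ * pd (pd f i0) i x₀)) / (1 + pd f i0 x₀ ^ 2) ^ 2 := by
    intro i
    rw [pd_pd_log_vf hf i i x₀, hpdv2 i i, hpdv0 i, hVval]
    field_simp
  -- third derivative symmetry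
  have hthird : ∀ i, pd (pd (pd f i) i) i0 x₀ = pd (pd (pd f i0) i) i x₀ := by
    intro i
    have e1 : pd (pd (pd f i) i) i0 x₀ = pd (pd (pd f i) i0) i x₀ :=
      pd_comm (contDiff_pd hf i) i i0 x₀
    have e2 : pd (pd f i) i0 = pd (pd f i0) i := funext fun y => pd_comm hf i i0 y
    rw [e1, e2]
  -- differentiate the λ-hypersurface equation
  have hGR : (fun x => (∑ i, pd (pd f i) i x)
        - (∑ i, ∑ j, pd f i x * pd f j x * pd (pd f j) i x) / vf f x)
      = fun x => -f x + ((∑ i, x i * pd f i x) + lam * Real.sqrt (vf f x)) := by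
    funext x
    rw [← sum_gInv_eq f x, heq x]
    simp only [vf]
    ring
  have hD := congrArg (fun g => pd g i0 x₀) hGR
  have dSumDiag : ∀ x, DifferentiableAt ℝ (fun y => ∑ i, pd (pd f i) i y) x :=
    fun x => DifferentiableAt.fun_sum fun i _ => diffAt_pd (contDiff_pd hf i) i x
  have dN : ∀ x, DifferentiableAt ℝ
      (fun y => ∑ i, ∑ j, pd f i y * pd f j y * pd (pd f j) i y) x :=
    fun x => DifferentiableAt.fun_sum fun i _ => DifferentiableAt.fun_sum fun j _ =>
      ((diffAt_pd hf i x).mul (diffAt_pd hf j x)).mul (diffAt_pd (contDiff_pd hf j) i x)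
  have hDL : pd (fun x => (∑ i, pd (pd f i) i x)
        - (∑ i, ∑ j, pd f i x * pd f j x * pd (pd f j) i x) / vf f x) i0 x₀
      = (∑ i, pd (pd (pd f i) i) i0 x₀)
        - ((pd (fun y => ∑ i, ∑ j, pd f i y * pd f j y * pd (pd f j) i y) i0 x₀) * vf f x₀
            - (∑ i, ∑ j, pd f i x₀ * pd f j x₀ * pd (pd f j) i x₀) * pd (vf f) i0 x₀)
          / (vf f x₀) ^ 2 := by
    calc pd (fun x => (∑ i, pd (pd f i) i x)
          - (∑ i, ∑ j, pd f i x * pd f j x * pd (pd f j) i x) / vf f x) i0 x₀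
        = pd (fun y => ∑ i, pd (pd f i) i y) i0 x₀
          - pd (fun y => (∑ i, ∑ j, pd f i y * pd f j y * pd (pd f j) i y) / vf f y) i0 x₀ :=
          pd_sub (dSumDiag x₀) (diffAt_div (dN x₀) (diffAt_vf hf x₀) (vf_ne x₀))
      _ = _ := by
          rw [pd_sum_diag hf i0 x₀, pd_div (dN x₀) (diffAt_vf hf x₀) (vf_ne x₀)]
  have hDR : pd (fun x => -f x + ((∑ i, x i * pd f i x) + lam * Real.sqrt (vf f x))) i0 x₀
      = -pd f i0 x₀ + ((pd f i0 x₀ + ∑ i, x₀ i * pd (pd f i) i0 x₀)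
          + lam * (pd (vf f) i0 x₀ / (2 * Real.sqrt (vf f x₀)))) := by
    have d1 : DifferentiableAt ℝ (fun y : Fin n → ℝ => -f y) x₀ :=
      (hf.differentiable (by simp) x₀).neg
    have d2 : DifferentiableAt ℝ (fun y => ∑ i, y i * pd f i y) x₀ :=
      DifferentiableAt.fun_sum fun i _ => (diffAt_coord i x₀).mul (diffAt_pd hf i x₀)
    have d3 : DifferentiableAt ℝ (fun y => lam * Real.sqrt (vf f y)) x₀ :=
      (diffAt_sqrt_vf hf x₀).const_mul lam
    calc pd (fun x => -f x + ((∑ i, x i * pd f i x) + lam * Real.sqrt (vf f x))) i0 x₀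
        = pd (fun y => -f y) i0 x₀
          + pd (fun y => (∑ i, y i * pd f i y) + lam * Real.sqrt (vf f y)) i0 x₀ :=
          pd_add d1 (d2.add d3)
      _ = pd (fun y => -f y) i0 x₀ + (pd (fun y => ∑ i, y i * pd f i y) i0 x₀
            + pd (fun y => lam * Real.sqrt (vf f y)) i0 x₀) := by
          exact congrArg (fun z => pd (fun y => -f y) i0 x₀ + z) (pd_add d2 d3)
      _ = _ := by
          rw [pd_neg, pd_xF hf i0 x₀, pd_lam_sqrt hf lam i0 x₀]
  -- collapse sums at x₀
  have hN0 : ∑ i, ∑ j, pd f i x₀ * pd f j x₀ * pd (pd f j) i x₀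
      = pd f i0 x₀ * pd f i0 x₀ * pd (pd f i0) i0 x₀ := by
    rw [Finset.sum_eq_single i0 (fun i _ hi => by simp [hu i hi])
      (fun h => absurd (Finset.mem_univ i0) h)]
    rw [Finset.sum_eq_single i0 (fun j _ hj => by simp [hu j hj])
      (fun h => absurd (Finset.mem_univ i0) h)]
  have hpdN : pd (fun y => ∑ i, ∑ j, pd f i y * pd f j y * pd (pd f j) i y) i0 x₀
      = 2 * (pd f i0 x₀ * ∑ i, pd (pd f i0) i x₀ ^ 2)
        + pd f i0 x₀ ^ 2 * pd (pd (pd f i0) i0) i0 x₀ := by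
    rw [pd_Nf hf i0 x₀]
    have hterm : ∀ i j : Fin n,
        (pd (pd f i) i0 x₀ * pd f j x₀ + pd f i x₀ * pd (pd f j) i0 x₀) * pd (pd f j) i x₀
          + pd f i x₀ * pd f j x₀ * pd (pd (pd f j) i) i0 x₀
        = pd f j x₀ * (pd (pd f i) i0 x₀ * pd (pd f j) i x₀)
          + pd f i x₀ * pd f j x₀ * pd (pd (pd f j) i) i0 x₀
          + pd f i x₀ * (pd (pd f j) i0 x₀ * pd (pd f j) i x₀) := fun i j => by ring
    rw [Finset.sum_congr rfl fun i _ => Finset.sum_congr rfl fun j _ => hterm i j]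
    rw [Finset.sum_congr rfl fun i (_ : i ∈ Finset.univ) =>
      (Finset.sum_add_distrib (s := Finset.univ))]
    rw [Finset.sum_congr rfl fun i (_ : i ∈ Finset.univ) =>
      congrArg (· + _) (Finset.sum_add_distrib (s := Finset.univ))]
    rw [Finset.sum_add_distrib, Finset.sum_add_distrib]
    have hA : ∑ i, ∑ j, pd f j x₀ * (pd (pd f i) i0 x₀ * pd (pd f j) i x₀)
        = pd f i0 x₀ * ∑ i, pd (pd f i0) i x₀ ^ 2 := by
      rw [Finset.sum_congr rfl fun i (_ : i ∈ Finset.univ) =>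
        Finset.sum_eq_single i0 (fun j _ hj => by rw [hu j hj]; ring)
          (fun h => absurd (Finset.mem_univ i0) h)]
      rw [Finset.mul_sum]
      refine Finset.sum_congr rfl fun i _ => ?_
      rw [hsym2 i0 i]
      ring
    have hB : ∑ i, ∑ j, pd f i x₀ * pd f j x₀ * pd (pd (pd f j) i) i0 x₀
        = pd f i0 x₀ ^ 2 * pd (pd (pd f i0) i0) i0 x₀ := by
      rw [Finset.sum_eq_single i0 (fun i _ hi => by simp [hu i hi])
        (fun h => absurd (Finset.mem_univ i0) h)]
      rw [Finset.sum_eq_single i0 (fun j _ hj => by simp [hu j hj])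
        (fun h => absurd (Finset.mem_univ i0) h)]
      ring
    have hC : ∑ i, ∑ j, pd f i x₀ * (pd (pd f j) i0 x₀ * pd (pd f j) i x₀)
        = pd f i0 x₀ * ∑ j, pd (pd f i0) j x₀ ^ 2 := by
      rw [Finset.sum_eq_single i0 (fun i _ hi => by simp [hu i hi])
        (fun h => absurd (Finset.mem_univ i0) h)]
      rw [Finset.mul_sum]
      refine Finset.sum_congr rfl fun j _ => ?_
      rw [hsym2 j i0]
      ring
    rw [hA, hB, hC]
    ring
  have hKEY : (∑ i, pd (pd (pd f i0) i) i x₀)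
      = (∑ i, x₀ i * pd (pd f i0) i x₀)
        + lam * (pd f i0 x₀ * pd (pd f i0) i0 x₀ / Real.sqrt (1 + pd f i0 x₀ ^ 2))
        + pd f i0 x₀ ^ 2 * pd (pd (pd f i0) i0) i0 x₀ / (1 + pd f i0 x₀ ^ 2)
        + 2 * pd f i0 x₀ * (∑ i, pd (pd f i0) i x₀ ^ 2) / (1 + pd f i0 x₀ ^ 2)
        - 2 * pd f i0 x₀ ^ 3 * pd (pd f i0) i0 x₀ ^ 2 / (1 + pd f i0 x₀ ^ 2) ^ 2 := by
    have h := hD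
    rw [hDL, hDR, hpdN, hN0, hpdv0 i0, hVval] at h
    rw [show (∑ i, pd (pd (pd f i) i) i0 x₀) = ∑ i, pd (pd (pd f i0) i) i x₀ from
      Finset.sum_congr rfl fun i _ => hthird i] at h
    rw [show (∑ i, x₀ i * pd (pd f i) i0 x₀) = ∑ i, x₀ i * pd (pd f i0) i x₀ from
      Finset.sum_congr rfl fun i _ => by rw [hsym2]] at h
    field_simp at h ⊢
    linear_combination h
  clear hD hDL hDR hpdN hN0 hGR hthird dN dSumDiag hψv
  -- reduce the goal
  have hgmatinv : (gMat f x₀)⁻¹ = gInv f x₀ := rfl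
  rw [hgmatinv, h1a]
  have hcol1 : ∀ B : Fin n → Fin n → ℝ, ∀ i : Fin n,
      (∑ j, gInv f x₀ i j * B i j) = (1 + pd f i x₀ ^ 2)⁻¹ * B i i := by
    intro B i
    rw [Finset.sum_eq_single i (fun j _ hj => by
        rw [hginv0 i j, if_neg (fun hh => hj hh.symm), zero_mul])
      (fun h => absurd (Finset.mem_univ i) h), hginv0 i i, if_pos rfl]
  rw [Finset.sum_congr rfl fun i (_ : i ∈ Finset.univ) =>
    hcol1 (fun i j => pd (pd (fun x => Real.log (vf f x)) j) i x₀) i]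
  have hcol2 : ∑ i, ∑ j, gInv f x₀ i j * pd (fun x => Real.log (vf f x)) i x₀
        * pd (fun x => Real.log (vf f x)) j x₀
      = ∑ i, (1 + pd f i x₀ ^ 2)⁻¹ * pd (fun x => Real.log (vf f x)) i x₀
        * pd (fun x => Real.log (vf f x)) i x₀ := by
    refine Finset.sum_congr rfl fun i _ => ?_
    rw [Finset.sum_eq_single i (fun j _ hj => by
        rw [hginv0 i j, if_neg (fun hh => hj hh.symm), zero_mul, zero_mul])
      (fun h => absurd (Finset.mem_univ i) h), hginv0 i i, if_pos rfl]
  rw [hcol2]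
  have hcol3 : ∑ i, pd f i x₀ * pd (fun x => Real.log (vf f x)) i x₀
      = pd f i0 x₀ * pd (fun x => Real.log (vf f x)) i0 x₀ :=
    Finset.sum_eq_single i0 (fun i _ hi => by rw [hu i hi, zero_mul])
      (fun h => absurd (Finset.mem_univ i0) h)
  rw [hcol3]
  simp only [hψ1, hψ2]
  -- final algebra
  have e1 : ∑ i, (1 + pd f i x₀ ^ 2)⁻¹
        * (((∑ p, 2 * (pd (pd f p) i x₀ * pd (pd f p) i x₀))
              + 2 * (pd f i0 x₀ * pd (pd (pd f i0) i) i x₀)) / (1 + pd f i0 x₀ ^ 2)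
          - 2 * (pd f i0 x₀ * pd (pd f i0) i x₀) * (2 * (pd f i0 x₀ * pd (pd f i0) i x₀))
            / (1 + pd f i0 x₀ ^ 2) ^ 2)
      = 2 / (1 + pd f i0 x₀ ^ 2)
          * (∑ i, (∑ p, pd (pd f p) i x₀ ^ 2) / (1 + pd f i x₀ ^ 2))
        + 2 * pd f i0 x₀ / (1 + pd f i0 x₀ ^ 2)
          * (∑ i, pd (pd (pd f i0) i) i x₀ / (1 + pd f i x₀ ^ 2))
        - 4 * pd f i0 x₀ ^ 2 / (1 + pd f i0 x₀ ^ 2) ^ 2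
          * (∑ i, pd (pd f i0) i x₀ ^ 2 / (1 + pd f i x₀ ^ 2)) := by
    have inner : ∀ i : Fin n, (1 + pd f i x₀ ^ 2)⁻¹
          * (((∑ p, 2 * (pd (pd f p) i x₀ * pd (pd f p) i x₀))
                + 2 * (pd f i0 x₀ * pd (pd (pd f i0) i) i x₀)) / (1 + pd f i0 x₀ ^ 2)
            - 2 * (pd f i0 x₀ * pd (pd f i0) i x₀) * (2 * (pd f i0 x₀ * pd (pd f i0) i x₀))
              / (1 + pd f i0 x₀ ^ 2) ^ 2)
        = 2 / (1 + pd f i0 x₀ ^ 2) * ((∑ p, pd (pd f p) i x₀ ^ 2) / (1 + pd f i x₀ ^ 2))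
          + 2 * pd f i0 x₀ / (1 + pd f i0 x₀ ^ 2)
            * (pd (pd (pd f i0) i) i x₀ / (1 + pd f i x₀ ^ 2))
          - 4 * pd f i0 x₀ ^ 2 / (1 + pd f i0 x₀ ^ 2) ^ 2
            * (pd (pd f i0) i x₀ ^ 2 / (1 + pd f i x₀ ^ 2)) := by
      intro i
      have hp : (∑ p, 2 * (pd (pd f p) i x₀ * pd (pd f p) i x₀))
          = 2 * ∑ p, pd (pd f p) i x₀ ^ 2 := by
        rw [Finset.mul_sum]; exact Finset.sum_congr rfl fun p _ => by ring
      rw [hp]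
      field_simp
      ring
    rw [Finset.sum_congr rfl fun i (_ : i ∈ Finset.univ) => inner i,
      Finset.sum_sub_distrib, Finset.sum_add_distrib,
      ← Finset.mul_sum, ← Finset.mul_sum, ← Finset.mul_sum]
  have e2 : ∑ i, x₀ i * (2 * (pd f i0 x₀ * pd (pd f i0) i x₀) / (1 + pd f i0 x₀ ^ 2))
      = 2 * pd f i0 x₀ / (1 + pd f i0 x₀ ^ 2) * (∑ i, x₀ i * pd (pd f i0) i x₀) := by
    rw [Finset.mul_sum]
    exact Finset.sum_congr rfl fun i _ => by ring
  have e4 : ∑ i, (1 + pd f i x₀ ^ 2)⁻¹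
        * (2 * (pd f i0 x₀ * pd (pd f i0) i x₀) / (1 + pd f i0 x₀ ^ 2))
        * (2 * (pd f i0 x₀ * pd (pd f i0) i x₀) / (1 + pd f i0 x₀ ^ 2))
      = 4 * pd f i0 x₀ ^ 2 / (1 + pd f i0 x₀ ^ 2) ^ 2
        * (∑ i, pd (pd f i0) i x₀ ^ 2 / (1 + pd f i x₀ ^ 2)) := by
    rw [Finset.mul_sum]
    refine Finset.sum_congr rfl fun i _ => ?_
    field_simp
    ring
  have e5 : ∑ i, ∑ p, pd (pd f p) i x₀ ^ 2
        / ((1 + pd f i x₀ ^ 2) * (1 + pd f p x₀ ^ 2) * (1 + pd f i0 x₀ ^ 2))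
      = 1 / (1 + pd f i0 x₀ ^ 2)
          * (∑ i, (∑ p, pd (pd f p) i x₀ ^ 2) / (1 + pd f i x₀ ^ 2))
        - pd f i0 x₀ ^ 2 / (1 + pd f i0 x₀ ^ 2) ^ 2
          * (∑ i, pd (pd f i0) i x₀ ^ 2 / (1 + pd f i x₀ ^ 2)) := by
    have inner : ∀ i : Fin n, ∑ p, pd (pd f p) i x₀ ^ 2
          / ((1 + pd f i x₀ ^ 2) * (1 + pd f p x₀ ^ 2) * (1 + pd f i0 x₀ ^ 2))
        = 1 / (1 + pd f i0 x₀ ^ 2) * ((∑ p, pd (pd f p) i x₀ ^ 2) / (1 + pd f i x₀ ^ 2))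
          - pd f i0 x₀ ^ 2 / (1 + pd f i0 x₀ ^ 2) ^ 2
            * (pd (pd f i0) i x₀ ^ 2 / (1 + pd f i x₀ ^ 2)) := by
      intro i
      have hsub : ∑ p, (pd (pd f p) i x₀ ^ 2
            / ((1 + pd f i x₀ ^ 2) * (1 + pd f p x₀ ^ 2) * (1 + pd f i0 x₀ ^ 2))
          - pd (pd f p) i x₀ ^ 2 / ((1 + pd f i x₀ ^ 2) * (1 + pd f i0 x₀ ^ 2)))
          = - (pd f i0 x₀ ^ 2 / (1 + pd f i0 x₀ ^ 2) ^ 2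
              * (pd (pd f i0) i x₀ ^ 2 / (1 + pd f i x₀ ^ 2))) := by
        rw [Finset.sum_eq_single i0 (fun p _ hp => by rw [hu p hp]; norm_num)
          (fun h => absurd (Finset.mem_univ i0) h)]
        field_simp
        ring
      rw [Finset.sum_sub_distrib] at hsub
      have hdiv : ∑ p, pd (pd f p) i x₀ ^ 2 / ((1 + pd f i x₀ ^ 2) * (1 + pd f i0 x₀ ^ 2))
          = (∑ p, pd (pd f p) i x₀ ^ 2) / ((1 + pd f i x₀ ^ 2) * (1 + pd f i0 x₀ ^ 2)) :=
        (Finset.sum_div _ _ _).symm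
      rw [hdiv] at hsub
      have expand : (∑ p, pd (pd f p) i x₀ ^ 2) / ((1 + pd f i x₀ ^ 2) * (1 + pd f i0 x₀ ^ 2))
          = 1 / (1 + pd f i0 x₀ ^ 2) * ((∑ p, pd (pd f p) i x₀ ^ 2) / (1 + pd f i x₀ ^ 2)) := by
        field_simp
      linarith [hsub]
    rw [Finset.sum_congr rfl fun i (_ : i ∈ Finset.univ) => inner i,
      Finset.sum_sub_distrib, ← Finset.mul_sum, ← Finset.mul_sum]
  have e6 : ∑ i, pd (pd (pd f i0) i) i x₀ / (1 + pd f i x₀ ^ 2)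
      = (∑ i, pd (pd (pd f i0) i) i x₀)
        - pd f i0 x₀ ^ 2 * pd (pd (pd f i0) i0) i0 x₀ / (1 + pd f i0 x₀ ^ 2) := by
    have hsub : ∑ i, (pd (pd (pd f i0) i) i x₀ / (1 + pd f i x₀ ^ 2)
          - pd (pd (pd f i0) i) i x₀)
        = - (pd f i0 x₀ ^ 2 * pd (pd (pd f i0) i0) i0 x₀ / (1 + pd f i0 x₀ ^ 2)) := by
      rw [Finset.sum_eq_single i0 (fun i _ hi => by rw [hu i hi]; norm_num)
        (fun h => absurd (Finset.mem_univ i0) h)]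
      field_simp
      ring
    rw [Finset.sum_sub_distrib] at hsub
    linarith [hsub]
  have e7 : ∑ i, pd (pd f i0) i x₀ ^ 2 / (1 + pd f i x₀ ^ 2)
      = (∑ i, pd (pd f i0) i x₀ ^ 2)
        - pd f i0 x₀ ^ 2 * pd (pd f i0) i0 x₀ ^ 2 / (1 + pd f i0 x₀ ^ 2) := by
    have hsub : ∑ i, (pd (pd f i0) i x₀ ^ 2 / (1 + pd f i x₀ ^ 2)
          - pd (pd f i0) i x₀ ^ 2)
        = - (pd f i0 x₀ ^ 2 * pd (pd f i0) i0 x₀ ^ 2 / (1 + pd f i0 x₀ ^ 2)) := by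
      rw [Finset.sum_eq_single i0 (fun i _ hi => by rw [hu i hi]; norm_num)
        (fun h => absurd (Finset.mem_univ i0) h)]
      field_simp
      ring
    rw [Finset.sum_sub_distrib] at hsub
    linarith [hsub]
  rw [e1, e2, e4, e5, e6, e7, hKEY]
  field_simp
  ring
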